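/- Let (R, m) be a Noetherian local ring with order function ν (ν(a) is the largest t with a ∈ m^t). Let p^e ≥ 2 and a_1, ..., a_{p^e} ∈ R. Suppose n ∈ {1, ..., p^e} satisfies ν(a_n)/n < ν(a_i)/i for all i < n and ν(a_n)/n ≤ ν(a_ℓ)/ℓ for all ℓ > n. Then for any monomial a_1^{α_1} ⋯ a_{p^e}^{α_{p^e}} with Σ_j j·α_j = n·p^e and α_j ≠ 0 for some j < n, one has ν(a_1^{α_1} ⋯ a_{p^e}^{α_{p^e}}) > p^e · ν(a_n). -/

import Mathlib

open Finset

lemma prod_pow_mem_aux {R : Type*} [CommRing R] (I : Ideal R) (a : ℕ → R) (t α : ℕ → ℕ)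
    (s : Finset ℕ) (h : ∀ j ∈ s, a j ∈ I ^ t j) :
    (∏ j ∈ s, a j ^ α j) ∈ I ^ (∑ j ∈ s, α j * t j) := by
  induction s using Finset.induction with
  | empty => simp
  | @insert x s hx ih =>
    rw [Finset.prod_insert hx, Finset.sum_insert hx, pow_add]
    refine Ideal.mul_mem_mul ?_ (ih fun j hj => h j (Finset.mem_insert_of_mem hj))
    rw [mul_comm, pow_mul]
    exact Ideal.pow_mem_pow (h x (Finset.mem_insert_self _ _)) _

/-- Let `(R, m)` be a Noetherian local ring with order function `ν`
(`ν a` is the largest `t` with `a ∈ m^t`, with value `⊤` if `a` lies in all powers).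
Let `p^e ≥ 2` (denoted `pe`) and `a_1, …, a_{p^e} ∈ R`.  Suppose `n ∈ {1, …, p^e}` satisfies
`ν(a_n)/n < ν(a_i)/i` for `i < n` and `ν(a_n)/n ≤ ν(a_ℓ)/ℓ` for `ℓ > n`
(stated cross-multiplied).  Then for any monomial `a_1^{α_1} ⋯ a_{p^e}^{α_{p^e}}` with
`Σ_j j·α_j = n·p^e` and `α_j ≠ 0` for some `j < n`, one has
`ν(a_1^{α_1} ⋯ a_{p^e}^{α_{p^e}}) > p^e · ν(a_n)`. -/
theorem order_of_weighted_monomial_gt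
    (R : Type*) [CommRing R] [IsNoetherianRing R] [IsLocalRing R]
    (ν : R → ℕ∞)
    (hν : ∀ (a : R) (t : ℕ), a ∈ (IsLocalRing.maximalIdeal R) ^ t ↔ (t : ℕ∞) ≤ ν a)
    (pe : ℕ) (hpe : 2 ≤ pe)
    (a : ℕ → R) (α : ℕ → ℕ) (n : ℕ) (hn1 : 1 ≤ n) (hn2 : n ≤ pe)
    (hlt : ∀ i, 1 ≤ i → i < n → (i : ℕ∞) * ν (a n) < (n : ℕ∞) * ν (a i))
    (hle : ∀ l, n < l → l ≤ pe → (l : ℕ∞) * ν (a n) ≤ (n : ℕ∞) * ν (a l))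
    (hsum : ∑ j ∈ Finset.Icc 1 pe, j * α j = n * pe)
    (hj : ∃ j, 1 ≤ j ∧ j < n ∧ α j ≠ 0) :
    (pe : ℕ∞) * ν (a n) < ν (∏ j ∈ Finset.Icc 1 pe, a j ^ α j) := by
  obtain ⟨j0, hj01, hj0n, hj0α⟩ := hj
  -- ν (a n) is finite
  have hfin : ν (a n) ≠ ⊤ := by
    intro h
    have h1 := hlt j0 hj01 hj0n
    rw [h, ENat.mul_top (by exact_mod_cast Nat.one_le_iff_ne_zero.mp hj01)] at h1
    exact not_top_lt h1
  set v := (ν (a n)).toNat with hv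
  have hvn : ν (a n) = (v : ℕ∞) := (ENat.coe_toNat hfin).symm
  -- choose natural exponents t j
  set t : ℕ → ℕ := fun j => if ν (a j) = ⊤ then j * v + 1 else (ν (a j)).toNat with ht
  have hmem : ∀ j, a j ∈ (IsLocalRing.maximalIdeal R) ^ (t j) := by
    intro j
    rw [hν]
    by_cases hj : ν (a j) = ⊤
    · simp [ht, hj]
    · simp [ht, hj, ENat.coe_toNat hj]
  have hge1 : ∀ j, 1 ≤ j → j < n → j * v + 1 ≤ n * t j := by
    intro j h1 h2
    by_cases hjt : ν (a j) = ⊤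
    · have : t j = j * v + 1 := by simp [ht, hjt]
      rw [this]
      calc j * v + 1 ≤ 1 * (n * (j * v + 1)) := by nlinarith
        _ = n * (j * v + 1) := one_mul _
    · have h3 := hlt j h1 h2
      rw [hvn, ← ENat.coe_toNat hjt] at h3
      have : t j = (ν (a j)).toNat := by simp [ht, hjt]
      rw [this]
      have h4 : (j * v : ℕ) < n * (ν (a j)).toNat := by exact_mod_cast h3
      omega
  have hge2 : ∀ j, n ≤ j → j ≤ pe → j * v ≤ n * t j := by
    intro j h1 h2
    rcases eq_or_lt_of_le h1 with h | h
    · have htn : t n = v := by simp [ht, hfin, hv]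
      rw [← h, htn]
    · have h3 := hle j h h2
      by_cases hjt : ν (a j) = ⊤
      · have : t j = j * v + 1 := by simp [ht, hjt]
        rw [this]; nlinarith
      · rw [hvn, ← ENat.coe_toNat hjt] at h3
        have : t j = (ν (a j)).toNat := by simp [ht, hjt]
        rw [this]
        exact_mod_cast h3
  -- the key sum inequality
  have hkey : pe * v + 1 ≤ ∑ j ∈ Finset.Icc 1 pe, α j * t j := by
    have hstrict : ∑ j ∈ Finset.Icc 1 pe, α j * (j * v) <
        ∑ j ∈ Finset.Icc 1 pe, α j * (n * t j) := by
      refine Finset.sum_lt_sum (fun j hj => ?_) ⟨j0, ?_, ?_⟩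
      · simp only [Finset.mem_Icc] at hj
        rcases lt_or_ge j n with h | h
        · exact Nat.mul_le_mul_left _ (le_of_lt (Nat.lt_of_lt_of_le (Nat.lt_succ_self _)
            (hge1 j hj.1 h)))
        · exact Nat.mul_le_mul_left _ (hge2 j h hj.2)
      · exact Finset.mem_Icc.mpr ⟨hj01, le_trans (le_of_lt hj0n) hn2⟩
      · have h1 := hge1 j0 hj01 hj0n
        have h2 : 1 ≤ α j0 := Nat.one_le_iff_ne_zero.mpr hj0α
        calc α j0 * (j0 * v) < α j0 * (j0 * v + 1) := by nlinarith
          _ ≤ α j0 * (n * t j0) := Nat.mul_le_mul_left _ h1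
    have hL : ∑ j ∈ Finset.Icc 1 pe, α j * (j * v) = n * (pe * v) := by
      calc ∑ j ∈ Finset.Icc 1 pe, α j * (j * v)
          = (∑ j ∈ Finset.Icc 1 pe, j * α j) * v := by
            rw [Finset.sum_mul]; exact Finset.sum_congr rfl fun j _ => by ring
        _ = n * (pe * v) := by rw [hsum]; ring
    have hR : ∑ j ∈ Finset.Icc 1 pe, α j * (n * t j) =
        n * ∑ j ∈ Finset.Icc 1 pe, α j * t j := by
      rw [Finset.mul_sum]; exact Finset.sum_congr rfl fun j _ => by ring
    rw [hL, hR] at hstrict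
    have := Nat.lt_of_mul_lt_mul_left hstrict
    omega
  -- membership of the product
  have hprod : (∏ j ∈ Finset.Icc 1 pe, a j ^ α j) ∈
      (IsLocalRing.maximalIdeal R) ^ (pe * v + 1) := by
    have h1 := prod_pow_mem_aux (IsLocalRing.maximalIdeal R) a t α (Finset.Icc 1 pe)
      (fun j _ => hmem j)
    exact Ideal.pow_le_pow_right hkey h1
  have h2 : ((pe * v + 1 : ℕ) : ℕ∞) ≤ ν (∏ j ∈ Finset.Icc 1 pe, a j ^ α j) :=
    (hν _ _).mp hprod
  calc (pe : ℕ∞) * ν (a n) = ((pe * v : ℕ) : ℕ∞) := by rw [hvn]; push_cast; ring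
    _ < ((pe * v + 1 : ℕ) : ℕ∞) := by exact_mod_cast Nat.lt_succ_self _
    _ ≤ _ := h2
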